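/- arXiv:2504.02661 — 3 statements merged into one kernel-verified Lean document; each statement's English description precedes it below -/
import Mathlib

section
/- Let u : ℝⁿ → ℝ be C² with u > 0, let g_{ij} be the gnomonic-projection round metric on ℝⁿ, and set h(x) = u(x)/√(1+|x|²). Then for any p ∈ ℝ, the equation det(∇²_{ij}h + h g_{ij}) / det(g_{ij}) = h^{p-1} holds at x if and only if det D²u(x) = (1+|x|²)^{-(p+n+1)/2} u(x)^{p-1}. -/
/-- The ordinary Hessian matrix `[∂²f/∂xⁱ∂xʲ]` of a function on `ℝⁿ`. -/
noncomputable def hessMat (n : ℕ) (f : (Fin n → ℝ) → ℝ) (x : Fin n → ℝ) :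
    Matrix (Fin n) (Fin n) ℝ :=
  Matrix.of fun i j =>
    fderiv ℝ (fun y => fderiv ℝ f y (Pi.single j 1)) x (Pi.single i 1)

/-- The round metric in gnomonic coordinates. -/
noncomputable def gnomonicMetric (n : ℕ) (x : Fin n → ℝ) : Matrix (Fin n) (Fin n) ℝ :=
  Matrix.of fun i j =>
    (1 + ∑ m, x m ^ 2)⁻¹ * ((if i = j then (1 : ℝ) else 0) - x i * x j / (1 + ∑ m, x m ^ 2))

/-- The Christoffel symbols `Γᵏ_{ij}(x) = −(δ_{jk}xⁱ + δ_{ik}xʲ)/(1+|x|²)`. -/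
noncomputable def christoffel (n : ℕ) (x : Fin n → ℝ) (k i j : Fin n) : ℝ :=
  -(((if j = k then (1 : ℝ) else 0) * x i + (if i = k then (1 : ℝ) else 0) * x j)
      / (1 + ∑ m, x m ^ 2))

/-- The covariant Hessian `∇²_{ij} f = ∂²_{ij} f − Γᵏ_{ij} ∂_k f`. -/
noncomputable def covHess (n : ℕ) (f : (Fin n → ℝ) → ℝ) (x : Fin n → ℝ) :
    Matrix (Fin n) (Fin n) ℝ :=
  Matrix.of fun i j =>
    hessMat n f x i j - ∑ k, christoffel n x k i j * fderiv ℝ f x (Pi.single k 1)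

open ContinuousLinearMap in
noncomputable def DS {n : ℕ} (x : Fin n → ℝ) : (Fin n → ℝ) →L[ℝ] ℝ :=
  ∑ m, (2 * x m) • (ContinuousLinearMap.proj m : (Fin n → ℝ) →L[ℝ] ℝ)

lemma Sf_pos {n : ℕ} (x : Fin n → ℝ) : 0 < 1 + ∑ m, x m ^ 2 := by positivity

lemma hasFDerivAt_Sf {n : ℕ} (x : Fin n → ℝ) :
    HasFDerivAt (fun y : Fin n → ℝ => 1 + ∑ m, y m ^ 2) (DS x) x := by
  have : HasFDerivAt (fun y : Fin n → ℝ => ∑ m, y m ^ 2) (DS x) x := by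
    apply HasFDerivAt.fun_sum
    intro m _
    have h1 : HasFDerivAt (fun y : Fin n → ℝ => y m)
        (ContinuousLinearMap.proj m : (Fin n → ℝ) →L[ℝ] ℝ) x :=
      (ContinuousLinearMap.proj m : (Fin n → ℝ) →L[ℝ] ℝ).hasFDerivAt
    have h2 := h1.fun_mul h1
    have : (2 * x m) • (ContinuousLinearMap.proj m : (Fin n → ℝ) →L[ℝ] ℝ)
        = x m • (ContinuousLinearMap.proj m : (Fin n → ℝ) →L[ℝ] ℝ)
          + x m • (ContinuousLinearMap.proj m : (Fin n → ℝ) →L[ℝ] ℝ) := by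
      rw [two_mul, add_smul]
    rw [this]
    simpa [pow_two] using h2
  simpa using this.const_add 1

lemma DS_apply {n : ℕ} (x : Fin n → ℝ) (k : Fin n) : DS x (Pi.single k 1) = 2 * x k := by
  simp [DS, Pi.single_apply]

noncomputable def DR {n : ℕ} (x : Fin n → ℝ) : (Fin n → ℝ) →L[ℝ] ℝ :=
  (1 / (2 * Real.sqrt (1 + ∑ m, x m ^ 2))) • DS x

lemma Rf_pos {n : ℕ} (x : Fin n → ℝ) : 0 < Real.sqrt (1 + ∑ m, x m ^ 2) :=
  Real.sqrt_pos.2 (Sf_pos x)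

lemma Rf_sq {n : ℕ} (x : Fin n → ℝ) :
    Real.sqrt (1 + ∑ m, x m ^ 2) ^ 2 = 1 + ∑ m, x m ^ 2 :=
  Real.sq_sqrt (Sf_pos x).le

lemma hasFDerivAt_Rf {n : ℕ} (x : Fin n → ℝ) :
    HasFDerivAt (fun y : Fin n → ℝ => Real.sqrt (1 + ∑ m, y m ^ 2)) (DR x) x :=
  (hasFDerivAt_Sf x).sqrt (Sf_pos x).ne'

lemma DR_apply {n : ℕ} (x : Fin n → ℝ) (k : Fin n) :
    DR x (Pi.single k 1) = x k / Real.sqrt (1 + ∑ m, x m ^ 2) := by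
  have := Rf_pos x
  simp only [DR, ContinuousLinearMap.smul_apply, DS_apply, smul_eq_mul]
  field_simp

noncomputable def Dinv {n : ℕ} (x : Fin n → ℝ) : (Fin n → ℝ) →L[ℝ] ℝ :=
  (-(Real.sqrt (1 + ∑ m, x m ^ 2) ^ 2)⁻¹) • DR x

lemma hasFDerivAt_Rinv {n : ℕ} (x : Fin n → ℝ) :
    HasFDerivAt (fun y : Fin n → ℝ => (Real.sqrt (1 + ∑ m, y m ^ 2))⁻¹) (Dinv x) x :=
  (hasDerivAt_inv (Rf_pos x).ne').comp_hasFDerivAt x (hasFDerivAt_Rf x)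

lemma hasFDerivAt_h {n : ℕ} {u : (Fin n → ℝ) → ℝ} (hu : ContDiff ℝ 2 u) (x : Fin n → ℝ) :
    HasFDerivAt (fun y : Fin n → ℝ => u y / Real.sqrt (1 + ∑ m, y m ^ 2))
      ((u x) • Dinv x + (Real.sqrt (1 + ∑ m, x m ^ 2))⁻¹ • fderiv ℝ u x) x := by
  have hud : HasFDerivAt u (fderiv ℝ u x) x :=
    ((hu.differentiable two_ne_zero) x).hasFDerivAt
  simpa [div_eq_mul_inv] using hud.fun_mul (hasFDerivAt_Rinv x)

lemma fderiv_h_apply {n : ℕ} {u : (Fin n → ℝ) → ℝ} (hu : ContDiff ℝ 2 u) (x : Fin n → ℝ)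
    (k : Fin n) :
    fderiv ℝ (fun y : Fin n → ℝ => u y / Real.sqrt (1 + ∑ m, y m ^ 2)) x (Pi.single k 1)
      = fderiv ℝ u x (Pi.single k 1) / Real.sqrt (1 + ∑ m, x m ^ 2)
        - u x * x k / Real.sqrt (1 + ∑ m, x m ^ 2) ^ 3 := by
  rw [(hasFDerivAt_h hu x).fderiv]
  have hrne := (Rf_pos x).ne'
  simp only [ContinuousLinearMap.add_apply, ContinuousLinearMap.smul_apply, Dinv,
    DR_apply, smul_eq_mul]
  generalize Real.sqrt (1 + ∑ m, x m ^ 2) = r at hrne ⊢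
  field_simp
  ring

lemma hasFDerivAt_Uj {n : ℕ} {u : (Fin n → ℝ) → ℝ} (hu : ContDiff ℝ 2 u) (x : Fin n → ℝ)
    (j : Fin n) :
    HasFDerivAt (fun y => fderiv ℝ u y (Pi.single j 1))
      (fderiv ℝ (fun y => fderiv ℝ u y (Pi.single j 1)) x) x := by
  have hC1 : ContDiff ℝ 1 (fun y => fderiv ℝ u y) := hu.fderiv_right (by norm_num)
  have hC2 : ContDiff ℝ 1 (fun y => fderiv ℝ u y (Pi.single j 1)) :=
    (ContinuousLinearMap.apply ℝ ℝ (Pi.single j 1 : Fin n → ℝ)).contDiff.comp hC1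
  exact ((hC2.differentiable one_ne_zero) x).hasFDerivAt

lemma hessMat_h {n : ℕ} {u : (Fin n → ℝ) → ℝ} (hu : ContDiff ℝ 2 u) (x : Fin n → ℝ)
    (i j : Fin n) :
    hessMat n (fun y => u y / Real.sqrt (1 + ∑ m, y m ^ 2)) x i j
      = hessMat n u x i j / Real.sqrt (1 + ∑ m, x m ^ 2)
        - fderiv ℝ u x (Pi.single j 1) * x i / Real.sqrt (1 + ∑ m, x m ^ 2) ^ 3
        - fderiv ℝ u x (Pi.single i 1) * x j / Real.sqrt (1 + ∑ m, x m ^ 2) ^ 3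
        - u x * (if i = j then 1 else 0) / Real.sqrt (1 + ∑ m, x m ^ 2) ^ 3
        + 3 * u x * x i * x j / Real.sqrt (1 + ∑ m, x m ^ 2) ^ 5 := by
  have hfun : (fun y => fderiv ℝ (fun z => u z / Real.sqrt (1 + ∑ m, z m ^ 2)) y
      (Pi.single j 1))
      = fun y => fderiv ℝ u y (Pi.single j 1) / Real.sqrt (1 + ∑ m, y m ^ 2)
        - u y * y j / Real.sqrt (1 + ∑ m, y m ^ 2) ^ 3 := by
    funext y
    exact fderiv_h_apply hu y j
  have hA : HasFDerivAt
      (fun y => fderiv ℝ u y (Pi.single j 1) / Real.sqrt (1 + ∑ m, y m ^ 2))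
      ((fderiv ℝ u x (Pi.single j 1)) • Dinv x
        + (Real.sqrt (1 + ∑ m, x m ^ 2))⁻¹ • fderiv ℝ (fun y => fderiv ℝ u y (Pi.single j 1)) x)
      x := by
    simpa [div_eq_mul_inv] using (hasFDerivAt_Uj hu x j).fun_mul (hasFDerivAt_Rinv x)
  -- derivative of (√(1+|y|²)³)⁻¹
  have h3 : HasFDerivAt (fun y : Fin n → ℝ => ((Real.sqrt (1 + ∑ m, y m ^ 2)) ^ 3)⁻¹)
      ((-((Real.sqrt (1 + ∑ m, x m ^ 2) ^ 3) ^ 2)⁻¹)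
        • ((3 * Real.sqrt (1 + ∑ m, x m ^ 2) ^ 2) • DR x)) x := by
    have hpow : HasDerivAt (fun t : ℝ => t ^ 3) (3 * Real.sqrt (1 + ∑ m, x m ^ 2) ^ 2)
        (Real.sqrt (1 + ∑ m, x m ^ 2)) := by
      simpa using hasDerivAt_pow 3 (Real.sqrt (1 + ∑ m, x m ^ 2))
    have hpow3 : HasFDerivAt (fun y : Fin n → ℝ => Real.sqrt (1 + ∑ m, y m ^ 2) ^ 3)
        ((3 * Real.sqrt (1 + ∑ m, x m ^ 2) ^ 2) • DR x) x := by
      have := hpow.comp_hasFDerivAt x (hasFDerivAt_Rf x); exact this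
    have hi : HasDerivAt (fun t : ℝ => t⁻¹)
        (-((Real.sqrt (1 + ∑ m, x m ^ 2) ^ 3) ^ 2)⁻¹)
        (Real.sqrt (1 + ∑ m, x m ^ 2) ^ 3) :=
      hasDerivAt_inv (pow_ne_zero 3 (Rf_pos x).ne')
    exact hi.comp_hasFDerivAt x hpow3
  have hmulA : HasFDerivAt (fun y : Fin n → ℝ => u y * y j)
      ((u x) • (ContinuousLinearMap.proj j : (Fin n → ℝ) →L[ℝ] ℝ) + (x j) • fderiv ℝ u x) x :=
    (((hu.differentiable two_ne_zero) x).hasFDerivAt).mul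
      (ContinuousLinearMap.proj j : (Fin n → ℝ) →L[ℝ] ℝ).hasFDerivAt
  have hB : HasFDerivAt
      (fun y => u y * y j / Real.sqrt (1 + ∑ m, y m ^ 2) ^ 3)
      ((u x * x j) • ((-((Real.sqrt (1 + ∑ m, x m ^ 2) ^ 3) ^ 2)⁻¹)
          • ((3 * Real.sqrt (1 + ∑ m, x m ^ 2) ^ 2) • DR x))
        + ((Real.sqrt (1 + ∑ m, x m ^ 2) ^ 3)⁻¹)
            • ((u x) • (ContinuousLinearMap.proj j : (Fin n → ℝ) →L[ℝ] ℝ)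
              + (x j) • fderiv ℝ u x)) x := by
    simpa [div_eq_mul_inv] using hmulA.fun_mul h3
  have htot := hA.fun_sub hB
  have : hessMat n (fun y => u y / Real.sqrt (1 + ∑ m, y m ^ 2)) x i j
      = fderiv ℝ (fun y => fderiv ℝ u y (Pi.single j 1) / Real.sqrt (1 + ∑ m, y m ^ 2)
        - u y * y j / Real.sqrt (1 + ∑ m, y m ^ 2) ^ 3) x (Pi.single i 1) := by
    simp only [hessMat, Matrix.of_apply]
    rw [hfun]
  rw [this, htot.fderiv]
  have hrne := (Rf_pos x).ne'
  simp only [ContinuousLinearMap.sub_apply, ContinuousLinearMap.add_apply,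
    ContinuousLinearMap.smul_apply, Dinv, DR_apply, smul_eq_mul,
    ContinuousLinearMap.proj_apply, Pi.single_apply, hessMat, Matrix.of_apply]
  generalize Real.sqrt (1 + ∑ m, x m ^ 2) = r at hrne ⊢
  rcases eq_or_ne i j with hij | hij
  · simp only [hij, if_pos rfl]
    field_simp
    ring
  · simp only [if_neg hij, if_neg (Ne.symm hij)]
    field_simp
    ring

lemma christoffel_sum {n : ℕ} (x : Fin n → ℝ) (i j : Fin n) (A : Fin n → ℝ) :
    ∑ k, christoffel n x k i j * A k
      = -(x i * A j + x j * A i) / (1 + ∑ m, x m ^ 2) := by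
  have h1 : ∀ k, christoffel n x k i j * A k
      = (if j = k then -(x i / (1 + ∑ m, x m ^ 2)) * A k else 0)
        + (if i = k then -(x j / (1 + ∑ m, x m ^ 2)) * A k else 0) := by
    intro k
    simp only [christoffel]
    split_ifs <;> ring
  simp_rw [h1]
  rw [Finset.sum_add_distrib, Finset.sum_ite_eq, Finset.sum_ite_eq]
  simp only [Finset.mem_univ, if_true]
  ring

lemma entry_key {n : ℕ} {u : (Fin n → ℝ) → ℝ} (hu : ContDiff ℝ 2 u) (x : Fin n → ℝ)
    (i j : Fin n) :
    covHess n (fun y => u y / Real.sqrt (1 + ∑ m, y m ^ 2)) x i j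
      + (u x / Real.sqrt (1 + ∑ m, x m ^ 2)) * gnomonicMetric n x i j
      = hessMat n u x i j / Real.sqrt (1 + ∑ m, x m ^ 2) := by
  simp only [covHess, Matrix.of_apply, gnomonicMetric]
  rw [hessMat_h hu x i j,
    christoffel_sum x i j (fun k => fderiv ℝ (fun y => u y / Real.sqrt (1 + ∑ m, y m ^ 2)) x
      (Pi.single k 1))]
  simp only [fderiv_h_apply hu x]
  have hr2 := Rf_sq x
  have hrne := (Rf_pos x).ne'
  generalize Real.sqrt (1 + ∑ m, x m ^ 2) = r at hr2 hrne ⊢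
  rw [← hr2]
  rcases eq_or_ne i j with hij | hij
  · simp only [hij, if_pos rfl]
    field_simp
    ring
  · simp only [if_neg hij]
    field_simp
    ring

lemma det_gnomonic {n : ℕ} (x : Fin n → ℝ) :
    (gnomonicMetric n x).det = (((1 + ∑ m, x m ^ 2)) ^ (n + 1))⁻¹ := by
  have hs := Sf_pos x
  have hmat : gnomonicMetric n x = (1 + ∑ m, x m ^ 2)⁻¹ •
      (1 + Matrix.replicateCol Unit (fun i => -(x i / (1 + ∑ m, x m ^ 2))) * Matrix.replicateRow Unit x) := by
    ext i j
    simp only [gnomonicMetric, Matrix.of_apply, Matrix.smul_apply, Matrix.add_apply,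
      Matrix.one_apply, Matrix.mul_apply, Matrix.replicateCol_apply, Matrix.replicateRow_apply,
      Finset.univ_unique, Finset.sum_singleton, smul_eq_mul]
    rcases eq_or_ne i j with hij | hij
    · simp only [hij, if_pos rfl]; ring
    · simp only [if_neg hij]; ring
  rw [hmat, Matrix.det_smul, Matrix.det_one_add_replicateCol_mul_replicateRow]
  have hdot : (dotProduct x fun i => -(x i / (1 + ∑ m, x m ^ 2)))
      = -((∑ m, x m ^ 2) / (1 + ∑ m, x m ^ 2)) := by
    simp only [dotProduct]
    have hterm : ∀ m : Fin n, x m * -(x m / (1 + ∑ m', x m' ^ 2))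
        = -(x m ^ 2) / (1 + ∑ m', x m' ^ 2) := fun m => by ring
    simp_rw [hterm]
    rw [← Finset.sum_div]
    simp [Finset.sum_neg_distrib, neg_div]
  rw [hdot]
  have hcard : Fintype.card (Fin n) = n := Fintype.card_fin n
  rw [hcard]
  field_simp
  have hx : ((1 + ∑ m, x m ^ 2)⁻¹) ^ n * (1 + ∑ m, x m ^ 2) ^ n = 1 := by
    rw [← mul_pow, inv_mul_cancel₀ hs.ne', one_pow]
  linear_combination (1 + ∑ m, x m ^ 2) * hx

/-- For `h = u/√(1+|x|²)` with `u > 0` of class `C²`, the equation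
`det(∇²_{ij}h + h g_{ij})/det(g_{ij}) = h^{p−1}` holds at `x` iff
`det D²u(x) = (1+|x|²)^{-(p+n+1)/2} u(x)^{p−1}`. -/
theorem projected_Lp_Minkowski_equation (n : ℕ) (p : ℝ) (u : (Fin n → ℝ) → ℝ)
    (hu : ContDiff ℝ 2 u) (hpos : ∀ x, 0 < u x) (x : Fin n → ℝ) :
    ((Matrix.of fun i j =>
        covHess n (fun y => u y / Real.sqrt (1 + ∑ m, y m ^ 2)) x i j
          + (u x / Real.sqrt (1 + ∑ m, x m ^ 2)) * gnomonicMetric n x i j :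
        Matrix (Fin n) (Fin n) ℝ).det / (gnomonicMetric n x).det
        = (u x / Real.sqrt (1 + ∑ m, x m ^ 2)) ^ (p - 1))
    ↔ (hessMat n u x).det
        = (1 + ∑ m, x m ^ 2) ^ (-(p + n + 1) / 2) * u x ^ (p - 1) := by
  have hrpos := Rf_pos x
  have hspos := Sf_pos x
  have hr2 := Rf_sq x
  have hup := hpos x
  have hMat : (Matrix.of fun i j =>
      covHess n (fun y => u y / Real.sqrt (1 + ∑ m, y m ^ 2)) x i j
        + (u x / Real.sqrt (1 + ∑ m, x m ^ 2)) * gnomonicMetric n x i j :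
      Matrix (Fin n) (Fin n) ℝ)
      = (Real.sqrt (1 + ∑ m, x m ^ 2))⁻¹ • hessMat n u x := by
    ext i j
    simp only [Matrix.of_apply, Matrix.smul_apply, smul_eq_mul]
    rw [entry_key hu x i j, div_eq_inv_mul]
  rw [hMat, Matrix.det_smul, det_gnomonic, Fintype.card_fin, div_inv_eq_mul]
  set r := Real.sqrt (1 + ∑ m, x m ^ 2) with hrdef
  set s := (1 + ∑ m, x m ^ 2 : ℝ) with hsdef
  set D := (hessMat n u x).det with hDdef
  -- the key algebraic identity
  have e1 : ((r⁻¹) ^ n : ℝ) = r ^ (-(n : ℝ)) := by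
    rw [inv_pow, ← Real.rpow_natCast r n, ← Real.rpow_neg hrpos.le]
  have e2 : (s : ℝ) ^ (n + 1) = r ^ ((2 * n + 2 : ℕ) : ℝ) := by
    rw [← hr2, ← pow_mul, Real.rpow_natCast]
    congr 1
  have e0 : s ^ (-(p + (n : ℝ) + 1) / 2) = r ^ (-(p + (n : ℝ) + 1)) := by
    rw [← hr2, ← Real.rpow_natCast r 2, ← Real.rpow_mul hrpos.le]
    congr 1
    push_cast
    ring
  have h3 : (u x / r) ^ (p - 1) = u x ^ (p - 1) * r ^ (-(p - 1)) := by
    rw [Real.div_rpow hup.le hrpos.le, Real.rpow_neg hrpos.le, div_eq_mul_inv]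
  have merge : ∀ a b : ℝ, r ^ a * r ^ b = r ^ (a + b) :=
    fun a b => (Real.rpow_add hrpos a b).symm
  have main : s ^ (-(p + (n : ℝ) + 1) / 2) * u x ^ (p - 1) * ((r⁻¹) ^ n * s ^ (n + 1))
      = (u x / r) ^ (p - 1) := by
    rw [e0, e1, e2, h3]
    rw [show r ^ (-(p + (n : ℝ) + 1)) * u x ^ (p - 1)
          * (r ^ (-(n : ℝ)) * r ^ ((2 * n + 2 : ℕ) : ℝ))
        = u x ^ (p - 1) * (r ^ (-(p + (n : ℝ) + 1)) * r ^ (-(n : ℝ)) * r ^ ((2 * n + 2 : ℕ) : ℝ))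
        from by ring, merge, merge]
    congr 2
    push_cast
    ring
  have hk : ((r⁻¹) ^ n * s ^ (n + 1) : ℝ) ≠ 0 := by positivity
  constructor
  · intro h
    have hD : D * ((r⁻¹) ^ n * s ^ (n + 1))
        = s ^ (-(p + (n : ℝ) + 1) / 2) * u x ^ (p - 1) * ((r⁻¹) ^ n * s ^ (n + 1)) := by
      rw [main, ← h]
      ring
    exact mul_right_cancel₀ hk hD
  · intro h
    rw [h, ← main]
    ring
end

section
/- Let n ≥ 1 and let u : ℝⁿ → ℝ be C² and positive satisfying det D²u = u^{-n-2} on ℝⁿ. Fix i and ε ∈ ℝ, and on the open set {x : 1 - ε xⁱ > 0} define v(y) = u(x)/(1 - ε xⁱ) where y = x/(1 - ε xⁱ). Then det D²v(y) = v(y)^{-n-2} on the image domain. -/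
open ContinuousLinearMap

section
variable (n : ℕ) (i : Fin n) (ε : ℝ)

noncomputable def Lmap : (Fin n → ℝ) →L[ℝ] ℝ := ε • ContinuousLinearMap.proj i

lemma Lmap_apply (a : Fin n → ℝ) : Lmap n i ε a = ε * a i := rfl

lemma hasS (z : Fin n → ℝ) : HasFDerivAt (fun t : Fin n → ℝ => 1 + ε * t i) (Lmap n i ε) z := by
  have := ((Lmap n i ε).hasFDerivAt (x := z)).const_add 1
  simpa [Lmap_apply] using this

lemma hasInvS (z : Fin n → ℝ) (hz : (1 : ℝ) + ε * z i ≠ 0) :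
    HasFDerivAt (fun t : Fin n → ℝ => (1 + ε * t i)⁻¹)
      ((-(ContinuousLinearMap.mulLeftRight ℝ ℝ) (1 + ε * z i)⁻¹ (1 + ε * z i)⁻¹).comp (Lmap n i ε)) z :=
  (hasFDerivAt_inv' hz).comp z (hasS n i ε z)

lemma hasPhi (z : Fin n → ℝ) (hz : (1 : ℝ) + ε * z i ≠ 0) :
    HasFDerivAt (fun t : Fin n → ℝ => (1 + ε * t i)⁻¹ • t)
      ((1 + ε * z i)⁻¹ • ContinuousLinearMap.id ℝ (Fin n → ℝ)
        + (((-(ContinuousLinearMap.mulLeftRight ℝ ℝ) (1 + ε * z i)⁻¹ (1 + ε * z i)⁻¹).comp (Lmap n i ε)).smulRight z)) z := by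
  have := (hasInvS n i ε z hz).smul (hasFDerivAt_id z)
  simpa [add_comm] using this

end
section
variable (n : ℕ) (i : Fin n) (ε : ℝ) (u : (Fin n → ℝ) → ℝ)

noncomputable def phiD (z : Fin n → ℝ) : (Fin n → ℝ) →L[ℝ] (Fin n → ℝ) :=
  (1 + ε * z i)⁻¹ • ContinuousLinearMap.id ℝ (Fin n → ℝ)
    + (((-(ContinuousLinearMap.mulLeftRight ℝ ℝ) (1 + ε * z i)⁻¹ (1 + ε * z i)⁻¹).comp (Lmap n i ε)).smulRight z)

lemma hasW (hu : ContDiff ℝ 2 u) (z : Fin n → ℝ) (hz : (1 : ℝ) + ε * z i ≠ 0) :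
    HasFDerivAt (fun t : Fin n → ℝ => (1 + ε * t i) * u ((1 + ε * t i)⁻¹ • t))
      ((1 + ε * z i) • ((fderiv ℝ u ((1 + ε * z i)⁻¹ • z)).comp (phiD n i ε z))
        + u ((1 + ε * z i)⁻¹ • z) • (Lmap n i ε)) z := by
  have hc : HasFDerivAt (fun t : Fin n → ℝ => u ((1 + ε * t i)⁻¹ • t))
      ((fderiv ℝ u ((1 + ε * z i)⁻¹ • z)).comp (phiD n i ε z)) z :=
    ((hu.differentiable (by norm_num) _).hasFDerivAt).comp z (hasPhi n i ε z hz)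
  exact (hasS n i ε z).mul hc

lemma fderivW_apply (hu : ContDiff ℝ 2 u) (z : Fin n → ℝ) (hz : (0:ℝ) < 1 + ε * z i) (j : Fin n) :
    fderiv ℝ (fun t : Fin n → ℝ => (1 + ε * t i) * u ((1 + ε * t i)⁻¹ • t)) z (Pi.single j 1)
      = (ε * (Pi.single j 1 : Fin n → ℝ) i) * u ((1 + ε * z i)⁻¹ • z)
        + fderiv ℝ u ((1 + ε * z i)⁻¹ • z) (Pi.single j 1)
        - (ε * (Pi.single j 1 : Fin n → ℝ) i) * fderiv ℝ u ((1 + ε * z i)⁻¹ • z) ((1 + ε * z i)⁻¹ • z) := by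
  rw [(hasW n i ε u hu z hz.ne').fderiv]
  simp only [ContinuousLinearMap.add_apply, ContinuousLinearMap.smul_apply,
    ContinuousLinearMap.comp_apply, ContinuousLinearMap.smulRight_apply,
    ContinuousLinearMap.id_apply, phiD, Lmap, ContinuousLinearMap.neg_apply,
    ContinuousLinearMap.mulLeftRight_apply, ContinuousLinearMap.proj_apply,
    map_add, map_smul, map_neg, smul_eq_mul]
  field_simp
  ring
end

section
variable (n : ℕ) (i : Fin n) (ε : ℝ) (u : (Fin n → ℝ) → ℝ)

lemma hessW_entry (hu : ContDiff ℝ 2 u) (y : Fin n → ℝ) (h : (0:ℝ) < 1 + ε * y i)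
    (l j : Fin n) :
    hessMat n (fun t : Fin n → ℝ => (1 + ε * t i) * u ((1 + ε * t i)⁻¹ • t)) y l j
      = (1 + ε * y i)⁻¹ *
        fderiv ℝ (fderiv ℝ u) ((1 + ε * y i)⁻¹ • y)
          (Pi.single l 1 - (ε * (Pi.single l 1 : Fin n → ℝ) i) • ((1 + ε * y i)⁻¹ • y))
          (Pi.single j 1 - (ε * (Pi.single j 1 : Fin n → ℝ) i) • ((1 + ε * y i)⁻¹ • y)) := by
  have hσ : (1 : ℝ) + ε * y i ≠ 0 := h.ne'
  set x : Fin n → ℝ := (1 + ε * y i)⁻¹ • y with hx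
  set D : (Fin n → ℝ) →L[ℝ] (Fin n → ℝ) := phiD n i ε y with hD
  have hdu2 : Differentiable ℝ (fderiv ℝ u) :=
    (hu.fderiv_right (m := 1) (by norm_num)).differentiable one_ne_zero
  have h1 : HasFDerivAt (fun z : Fin n → ℝ => u ((1 + ε * z i)⁻¹ • z))
      ((fderiv ℝ u x).comp D) y :=
    ((hu.differentiable (by norm_num) x).hasFDerivAt).comp y (hasPhi n i ε y hσ)
  have h2 : HasFDerivAt (fun z : Fin n → ℝ => fderiv ℝ u ((1 + ε * z i)⁻¹ • z))
      ((fderiv ℝ (fderiv ℝ u) x).comp D) y :=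
    ((hdu2 x).hasFDerivAt).comp y (hasPhi n i ε y hσ)
  have h3 := h2.clm_apply (hasFDerivAt_const (Pi.single j 1 : Fin n → ℝ) y)
  have h4 := h2.clm_apply (hasPhi n i ε y hσ)
  have hF := ((h1.const_mul (ε * (Pi.single j 1 : Fin n → ℝ) i)).add h3).sub
    (h4.const_mul (ε * (Pi.single j 1 : Fin n → ℝ) i))
  have hop : IsOpen {z : Fin n → ℝ | (0:ℝ) < 1 + ε * z i} :=
    isOpen_lt continuous_const (by fun_prop)
  have hev : ∀ᶠ z in nhds y, (0:ℝ) < 1 + ε * z i := hop.mem_nhds h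
  have hGF : (fun z : Fin n → ℝ =>
      fderiv ℝ (fun t : Fin n → ℝ => (1 + ε * t i) * u ((1 + ε * t i)⁻¹ • t)) z (Pi.single j 1))
      =ᶠ[nhds y] (fun z : Fin n → ℝ =>
        (ε * (Pi.single j 1 : Fin n → ℝ) i) * u ((1 + ε * z i)⁻¹ • z)
        + fderiv ℝ u ((1 + ε * z i)⁻¹ • z) (Pi.single j 1)
        - (ε * (Pi.single j 1 : Fin n → ℝ) i) *
            fderiv ℝ u ((1 + ε * z i)⁻¹ • z) ((1 + ε * z i)⁻¹ • z)) :=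
    hev.mono fun z hz => fderivW_apply n i ε u hu z hz j
  have hentry : hessMat n (fun t : Fin n → ℝ => (1 + ε * t i) * u ((1 + ε * t i)⁻¹ • t)) y l j
      = fderiv ℝ (fun z : Fin n → ℝ =>
        (ε * (Pi.single j 1 : Fin n → ℝ) i) * u ((1 + ε * z i)⁻¹ • z)
        + fderiv ℝ u ((1 + ε * z i)⁻¹ • z) (Pi.single j 1)
        - (ε * (Pi.single j 1 : Fin n → ℝ) i) *
            fderiv ℝ u ((1 + ε * z i)⁻¹ • z) ((1 + ε * z i)⁻¹ • z)) y (Pi.single l 1) := by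
    simp only [hessMat, Matrix.of_apply]
    exact congrFun (congrArg _ hGF.fderiv_eq) _
  simp only [Pi.add_def, Pi.sub_def] at hF
  rw [hentry, hF.fderiv]
  simp only [ContinuousLinearMap.add_apply, ContinuousLinearMap.sub_apply,
    ContinuousLinearMap.smul_apply, ContinuousLinearMap.comp_apply,
    ContinuousLinearMap.flip_apply, ContinuousLinearMap.smulRight_apply,
    ContinuousLinearMap.id_apply, ContinuousLinearMap.zero_apply, hD, phiD, Lmap, hx,
    ContinuousLinearMap.neg_apply, ContinuousLinearMap.mulLeftRight_apply,
    ContinuousLinearMap.proj_apply, map_add, map_smul, map_sub, map_neg, map_zero,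
    smul_eq_mul, ContinuousLinearMap.map_smul_of_tower]
  field_simp
  ring
end

section
variable (n : ℕ) (i : Fin n) (ε : ℝ) (u : (Fin n → ℝ) → ℝ)

noncomputable def projB (x : Fin n → ℝ) : Matrix (Fin n) (Fin n) ℝ :=
  Matrix.of fun l p => (if l = p then (1:ℝ) else 0) - (ε * (Pi.single l 1 : Fin n → ℝ) i) * x p

lemma hess_entry_eq (hu : ContDiff ℝ 2 u) (x : Fin n → ℝ) (p q : Fin n) :
    hessMat n u x p q = fderiv ℝ (fderiv ℝ u) x (Pi.single p 1) (Pi.single q 1) := by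
  have hdu2 : Differentiable ℝ (fderiv ℝ u) :=
    (hu.fderiv_right (m := 1) (by norm_num)).differentiable one_ne_zero
  have h3 := (hdu2 x).hasFDerivAt.clm_apply (hasFDerivAt_const (Pi.single q 1 : Fin n → ℝ) x)
  simp only [hessMat, Matrix.of_apply]
  rw [h3.fderiv]
  simp

lemma basis_expand (x : Fin n → ℝ) (l : Fin n) :
    (Pi.single l 1 : Fin n → ℝ) - (ε * (Pi.single l 1 : Fin n → ℝ) i) • x
      = ∑ p, projB n i ε x l p • (Pi.single p 1 : Fin n → ℝ) := by
  funext k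
  simp [projB, Finset.sum_apply, Pi.single_apply, ite_mul, Finset.sum_sub_distrib,
    Finset.sum_ite_eq, sub_mul, eq_comm, apply_ite (fun f : Fin n → ℝ => f k)]
end

section
variable (n : ℕ) (i : Fin n) (ε : ℝ) (u : (Fin n → ℝ) → ℝ)

lemma hessW_matrix (hu : ContDiff ℝ 2 u) (y : Fin n → ℝ) (h : (0:ℝ) < 1 + ε * y i) :
    hessMat n (fun t : Fin n → ℝ => (1 + ε * t i) * u ((1 + ε * t i)⁻¹ • t)) y
      = (1 + ε * y i)⁻¹ •
        (projB n i ε ((1 + ε * y i)⁻¹ • y) * hessMat n u ((1 + ε * y i)⁻¹ • y)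
          * (projB n i ε ((1 + ε * y i)⁻¹ • y)).transpose) := by
  set x : Fin n → ℝ := (1 + ε * y i)⁻¹ • y with hx
  set B : Matrix (Fin n) (Fin n) ℝ := projB n i ε x with hB
  ext l j
  rw [hessW_entry n i ε u hu y h l j]
  rw [Matrix.smul_apply, smul_eq_mul]
  congr 1
  rw [← hx, basis_expand n i ε x l, basis_expand n i ε x j]
  have lhs_eq : (fderiv ℝ (fderiv ℝ u) x (∑ p, B l p • (Pi.single p 1 : Fin n → ℝ)))
      (∑ q, B j q • (Pi.single q 1 : Fin n → ℝ))
      = ∑ p, ∑ q, B l p * (B j q * hessMat n u x p q) := by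
    simp only [map_sum, map_smul, ContinuousLinearMap.sum_apply,
      ContinuousLinearMap.smul_apply, smul_eq_mul, Finset.mul_sum, Finset.sum_mul]
    rw [Finset.sum_comm]
    refine Finset.sum_congr rfl fun p _ => Finset.sum_congr rfl fun q _ => ?_
    rw [← hess_entry_eq n u hu x p q]
    ring
  rw [lhs_eq]
  have rhs_eq : (B * hessMat n u x * B.transpose) l j
      = ∑ q, ∑ p, B l p * hessMat n u x p q * B j q := by
    simp only [Matrix.mul_apply, Matrix.transpose_apply, Finset.sum_mul]
  rw [rhs_eq, Finset.sum_comm]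
  exact Finset.sum_congr rfl fun p _ => Finset.sum_congr rfl fun q _ => by ring
end

section
variable (n : ℕ) (i : Fin n) (ε : ℝ)

lemma det_projB (x : Fin n → ℝ) : (projB n i ε x).det = 1 - ε * x i := by
  have hrw : projB n i ε x
      = 1 + Matrix.replicateCol (Fin 1) (fun l => -(ε * (Pi.single l 1 : Fin n → ℝ) i)) *
          Matrix.replicateRow (Fin 1) x := by
    ext l p
    simp [projB, Matrix.one_apply, Matrix.mul_apply, sub_eq_add_neg, neg_mul]
  rw [hrw]
  erw [Matrix.det_one_add_replicateCol_mul_replicateRow (ι := Fin 1)]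
  simp [dotProduct, Pi.single_apply, mul_ite, mul_comm,
    Finset.sum_ite_eq, eq_comm, sub_eq_add_neg]
end

/-- Projective invariance (group action `g⁹ᵢ(ε)`): if `u > 0` is a `C²` solution of
`det D²u = u^{-n-2}` on `ℝⁿ`, and `v` satisfies `v(y) = u(x)/(1 − ε xⁱ)` where
`y = x/(1 − ε xⁱ)` on `{x : 1 − ε xⁱ > 0}`, then `det D²v = v^{-n-2}` on the image
`{y : 1 + ε yⁱ > 0}`. -/
theorem projective_invariance (n : ℕ) (hn : 1 ≤ n) (i : Fin n) (ε : ℝ)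
    (u : (Fin n → ℝ) → ℝ) (hu : ContDiff ℝ 2 u) (hpos : ∀ x, 0 < u x)
    (hsol : ∀ x, (hessMat n u x).det = u x ^ (-(n : ℤ) - 2))
    (v : (Fin n → ℝ) → ℝ)
    (hv : ∀ x : Fin n → ℝ, 0 < 1 - ε * x i →
      v (fun j => x j / (1 - ε * x i)) = u x / (1 - ε * x i)) :
    ∀ y : Fin n → ℝ, 0 < 1 + ε * y i →
      (hessMat n v y).det = v y ^ (-(n : ℤ) - 2) := by
  have hvw : ∀ z : Fin n → ℝ, 0 < 1 + ε * z i →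
      v z = (1 + ε * z i) * u ((1 + ε * z i)⁻¹ • z) := by
    intro z hz
    set σ : ℝ := 1 + ε * z i with hσdef
    have hσ : σ ≠ 0 := hz.ne'
    have key : (1:ℝ) - ε * ((σ⁻¹ • z) i) = σ⁻¹ := by
      have : (σ⁻¹ • z) i = σ⁻¹ * z i := rfl
      rw [this]
      field_simp
      ring
    have hc : (0:ℝ) < 1 - ε * ((σ⁻¹ • z) i) := by rw [key]; positivity
    have harg : (fun j => (σ⁻¹ • z) j / (1 - ε * ((σ⁻¹ • z) i))) = z := by
      funext k
      rw [key]
      show σ⁻¹ * z k / σ⁻¹ = z k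
      field_simp
    have := hv (σ⁻¹ • z) hc
    rw [harg, key] at this
    rw [this, div_eq_mul_inv, inv_inv, mul_comm]
  intro y h
  have hσ : (1:ℝ) + ε * y i ≠ 0 := h.ne'
  have hop : IsOpen {z : Fin n → ℝ | (0:ℝ) < 1 + ε * z i} :=
    isOpen_lt continuous_const (by fun_prop)
  have hev : ∀ᶠ z in nhds y, (0:ℝ) < 1 + ε * z i := hop.mem_nhds h
  have hvw_ev : v =ᶠ[nhds y]
      (fun t : Fin n → ℝ => (1 + ε * t i) * u ((1 + ε * t i)⁻¹ • t)) :=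
    hev.mono fun z hz => hvw z hz
  have hmat : hessMat n v y
      = hessMat n (fun t : Fin n → ℝ => (1 + ε * t i) * u ((1 + ε * t i)⁻¹ • t)) y := by
    have h2 := hvw_ev.fderiv (𝕜 := ℝ)
    unfold hessMat
    ext l j
    simp only [Matrix.of_apply]
    have h3 : (fun z => fderiv ℝ v z (Pi.single j 1)) =ᶠ[nhds y]
        (fun z => fderiv ℝ (fun t : Fin n → ℝ =>
          (1 + ε * t i) * u ((1 + ε * t i)⁻¹ • t)) z (Pi.single j 1)) :=
      h2.mono fun z hz => by simp only [hz]
    rw [h3.fderiv_eq]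
  set x : Fin n → ℝ := (1 + ε * y i)⁻¹ • y with hx
  have hxi : (1:ℝ) - ε * x i = (1 + ε * y i)⁻¹ := by
    have : x i = (1 + ε * y i)⁻¹ * y i := rfl
    rw [this]
    field_simp
    ring
  rw [hmat, hessW_matrix n i ε u hu y h]
  rw [Matrix.det_smul, Matrix.det_mul, Matrix.det_mul, Matrix.det_transpose,
    det_projB, hsol x, hxi, hvw y h, ← hx]
  have hux : u x ≠ 0 := (hpos x).ne'
  have e1 : (-(n:ℤ) - 2) = -((n + 2 : ℕ) : ℤ) := by push_cast; ring
  rw [e1, zpow_neg, zpow_natCast, zpow_neg, zpow_natCast, mul_pow]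
  rw [Fintype.card_fin]
  rw [mul_inv]
  field_simp
  have hp : ((1 + ε * y i)⁻¹) ^ n * (1 + ε * y i) ^ n = 1 := by
    rw [← mul_pow, inv_mul_cancel₀ hσ, one_pow]
  linear_combination (1 + ε * y i * 2 + ε ^ 2 * y i ^ 2) * hp
end

section
/- Let n ≥ 1 and p ∈ ℝ, and let u : ℝⁿ → ℝ be C² and positive satisfying det D²u(x) = (1+|x|²)^{-(p+n+1)/2} u(x)^{p-1} on ℝⁿ. Fix an index i and ε ∈ ℝ, and on the open set {x : cos ε - xⁱ sin ε > 0} define v(y) = u(x)/(cos ε - xⁱ sin ε), where yʲ = xʲ/(cos ε - xⁱ sin ε) for j ≠ i and yⁱ = (sin ε + xⁱ cos ε)/(cos ε - xⁱ sin ε). Then det D²v(y) = (1+|y|²)^{-(p+n+1)/2} v(y)^{p-1}. -/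
namespace RotAux
open ContinuousLinearMap Matrix
variable {n : ℕ} (i : Fin n) (c s : ℝ)
def Wt (z : Fin n → ℝ) : ℝ := c + z i * s
def num (m : Fin n) (z : Fin n → ℝ) : ℝ := if m = i then z i * c - s else z m
noncomputable def phi (z : Fin n → ℝ) : Fin n → ℝ := fun m => num i c s m z * (Wt i c s z)⁻¹
noncomputable def Wlin : (Fin n → ℝ) →L[ℝ] ℝ := s • ContinuousLinearMap.proj i
noncomputable def Flin (m : Fin n) : (Fin n → ℝ) →L[ℝ] ℝ :=
  if m = i then c • ContinuousLinearMap.proj i else ContinuousLinearMap.proj m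
noncomputable def Dphi (z : Fin n → ℝ) : (Fin n → ℝ) →L[ℝ] (Fin n → ℝ) :=
  ContinuousLinearMap.pi fun m =>
    num i c s m z • (-((Wt i c s z ^ 2)⁻¹ • Wlin i s)) + (Wt i c s z)⁻¹ • Flin i c m
noncomputable def aVec (j : Fin n) : Fin n → ℝ :=
  if j = i then c • (Pi.single i 1 : Fin n → ℝ) else Pi.single j 1

lemma proj_hasFDerivAt (m : Fin n) (z : Fin n → ℝ) :
    HasFDerivAt (fun z : Fin n → ℝ => z m) (ContinuousLinearMap.proj (R := ℝ) m) z :=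
  (ContinuousLinearMap.proj (R := ℝ) (φ := fun _ : Fin n => ℝ) m).hasFDerivAt

lemma hasFDerivAt_Wt (z : Fin n → ℝ) : HasFDerivAt (Wt i c s) (Wlin i s) z := by
  show HasFDerivAt (fun z : Fin n → ℝ => c + z i * s) _ z
  have := ((proj_hasFDerivAt i z).mul_const s).const_add c
  simpa [Wlin] using this

lemma hasFDerivAt_num (m : Fin n) (z : Fin n → ℝ) :
    HasFDerivAt (num i c s m) (Flin i c m) z := by
  show HasFDerivAt (fun z : Fin n → ℝ => num i c s m z) _ z
  by_cases h : m = i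
  · subst h
    have := ((proj_hasFDerivAt m z).mul_const c).sub_const s
    simpa [num, Flin] using this
  · have := proj_hasFDerivAt (n := n) m z
    simpa [num, Flin, h] using this

lemma hasFDerivAt_phi {z : Fin n → ℝ} (hW : Wt i c s z ≠ 0) :
    HasFDerivAt (phi i c s) (Dphi i c s z) z := by
  apply hasFDerivAt_pi''
  intro m
  have hinv : HasFDerivAt (fun z => (Wt i c s z)⁻¹)
      (-((Wt i c s z ^ 2)⁻¹ • Wlin i s)) z := by
    have := (hasDerivAt_inv hW).comp_hasFDerivAt z (hasFDerivAt_Wt i c s z)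
    simpa [Function.comp_def, neg_smul] using this
  have := (hasFDerivAt_num i c s m z).mul hinv
  rw [show (fun x => phi i c s x m) = (num i c s m * fun z => (Wt i c s z)⁻¹) from rfl]
  simpa [Dphi, ContinuousLinearMap.proj_pi] using this

lemma key (j : Fin n) {z : Fin n → ℝ} (hW : Wt i c s z ≠ 0) :
    Wt i c s z • Dphi i c s z (Pi.single j 1)
      = aVec i c j - (if j = i then s else 0) • phi i c s z := by
  funext m
  simp only [Dphi, ContinuousLinearMap.pi_apply, Pi.smul_apply, Pi.sub_apply,
    ContinuousLinearMap.add_apply, ContinuousLinearMap.smul_apply,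
    ContinuousLinearMap.neg_apply, Wlin, Flin, aVec, phi, smul_eq_mul]
  by_cases hji : j = i <;> by_cases hmi : m = i <;>
    simp [hji, hmi, Pi.single_apply, ContinuousLinearMap.proj_apply] <;>
    field_simp <;> ring

lemma continuous_Wt : Continuous (Wt i c s) :=
  continuous_const.add ((continuous_apply i).mul continuous_const)

lemma isOpen_S : IsOpen {z : Fin n → ℝ | 0 < Wt i c s z} :=
  isOpen_lt continuous_const (continuous_Wt i c s)

lemma bilin_expand (T : (Fin n → ℝ) →L[ℝ] ((Fin n → ℝ) →L[ℝ] ℝ)) (q w : Fin n → ℝ) :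
    T q w = ∑ m, ∑ r, q m * w r * T (Pi.single m 1) (Pi.single r 1) := by
  have hq : q = ∑ m, q m • (Pi.single m 1 : Fin n → ℝ) := by
    conv_lhs => rw [← Finset.univ_sum_single q]
    exact Finset.sum_congr rfl fun m _ => by
      rw [← Pi.single_smul, smul_eq_mul, mul_one]
  have hw : w = ∑ r, w r • (Pi.single r 1 : Fin n → ℝ) := by
    conv_lhs => rw [← Finset.univ_sum_single w]
    exact Finset.sum_congr rfl fun r _ => by
      rw [← Pi.single_smul, smul_eq_mul, mul_one]
  conv_lhs => rw [hq]
  rw [map_sum, ContinuousLinearMap.sum_apply]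
  refine Finset.sum_congr rfl fun m _ => ?_
  rw [_root_.map_smul, ContinuousLinearMap.smul_apply, smul_eq_mul]
  conv_lhs => rw [hw]
  rw [map_sum, Finset.mul_sum]
  refine Finset.sum_congr rfl fun r _ => ?_
  rw [_root_.map_smul, smul_eq_mul]
  ring

lemma hess_transform (u v : (Fin n → ℝ) → ℝ) (hu : ContDiff ℝ 2 u)
    (hveq : ∀ z, 0 < Wt i c s z → v z = u (phi i c s z) * Wt i c s z)
    {y : Fin n → ℝ} (hy : 0 < Wt i c s y) :
    hessMat n v y = Wt i c s y •
      ((Matrix.of (fun m k => Dphi i c s y (Pi.single k 1) m))ᵀ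
        * hessMat n u (phi i c s y)
        * Matrix.of (fun m k => Dphi i c s y (Pi.single k 1) m)) := by
  have hud : Differentiable ℝ u := hu.differentiable (by norm_num)
  have hB : ContDiff ℝ 1 (fderiv ℝ u) := hu.fderiv_right (by norm_num)
  set B := fderiv ℝ u with hBdef
  set X := phi i c s y with hXdef
  have hWy : Wt i c s y ≠ 0 := ne_of_gt hy
  have hS := isOpen_S i c s (n := n)
  have claimA : ∀ (j : Fin n) z, 0 < Wt i c s z → fderiv ℝ v z (Pi.single j 1)
      = u (phi i c s z) * (if j = i then s else 0)
        + (B (phi i c s z) (aVec i c j)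
          - (if j = i then s else 0) * B (phi i c s z) (phi i c s z)) := by
    intro j z hz
    have hWz : Wt i c s z ≠ 0 := ne_of_gt hz
    have hphiz := hasFDerivAt_phi i c s hWz
    have h1 : HasFDerivAt (fun z => u (phi i c s z))
        ((B (phi i c s z)).comp (Dphi i c s z)) z :=
      (hud (phi i c s z)).hasFDerivAt.comp z hphiz
    have hg := h1.mul (hasFDerivAt_Wt i c s z)
    have hvg : v =ᶠ[nhds z] fun z => u (phi i c s z) * Wt i c s z :=
      Filter.eventuallyEq_of_mem (hS.mem_nhds hz) fun w hw => hveq w hw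
    rw [hvg.fderiv_eq, show (fun z => u (phi i c s z) * Wt i c s z) = ((fun z => u (phi i c s z)) * Wt i c s) from rfl, hg.fderiv]
    simp only [ContinuousLinearMap.add_apply, ContinuousLinearMap.smul_apply,
      ContinuousLinearMap.coe_comp', Function.comp_apply, smul_eq_mul]
    have e1 : Wlin i s (Pi.single j 1) = (if j = i then s else 0) := by
      by_cases hji : j = i <;> simp [Wlin, hji, Pi.single_apply]
    have e2 : Wt i c s z * B (phi i c s z) (Dphi i c s z (Pi.single j 1))
        = B (phi i c s z) (aVec i c j)
          - (if j = i then s else 0) * B (phi i c s z) (phi i c s z) := by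
      rw [← smul_eq_mul, ← _root_.map_smul, key i c s j hWz, map_sub, _root_.map_smul, smul_eq_mul]
    rw [e1, e2]
  have hphiy := hasFDerivAt_phi i c s hWy
  have hBX : HasFDerivAt B (fderiv ℝ B X) X := ((hB.differentiable (by norm_num)) X).hasFDerivAt
  have claimC : ∀ j k : Fin n, hessMat n v y k j
      = fderiv ℝ B X (Dphi i c s y (Pi.single k 1))
          (Wt i c s y • Dphi i c s y (Pi.single j 1)) := by
    intro j k
    have heq : (fun z => fderiv ℝ v z (Pi.single j 1)) =ᶠ[nhds y]
        (fun z => u (phi i c s z) * (if j = i then s else 0)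
          + (B (phi i c s z) (aVec i c j)
            - (if j = i then s else 0) * B (phi i c s z) (phi i c s z))) :=
      Filter.eventuallyEq_of_mem (hS.mem_nhds hy) fun w hw => claimA j w hw
    have hBc : HasFDerivAt (fun z => B (phi i c s z))
        ((fderiv ℝ B X).comp (Dphi i c s y)) y := hBX.comp y hphiy
    have h1 : HasFDerivAt (fun z => u (phi i c s z)) ((B X).comp (Dphi i c s y)) y :=
      (hud X).hasFDerivAt.comp y hphiy
    have t1 := h1.mul_const (if j = i then s else 0)
    have t2 : HasFDerivAt (fun z => B (phi i c s z) (aVec i c j)) _ y :=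
      hBc.clm_apply (hasFDerivAt_const _ _)
    have t3 : HasFDerivAt (fun z => B (phi i c s z) (phi i c s z)) _ y :=
      hBc.clm_apply hphiy
    have t3' := t3.const_mul (if j = i then s else 0)
    have hFj : HasFDerivAt (fun z => u (phi i c s z) * (if j = i then s else 0)
        + (B (phi i c s z) (aVec i c j)
          - (if j = i then s else 0) * B (phi i c s z) (phi i c s z))) _ y := t1.add (t2.sub t3')
    have hentry : hessMat n v y k j
        = fderiv ℝ (fun z => u (phi i c s z) * (if j = i then s else 0)
          + (B (phi i c s z) (aVec i c j)
            - (if j = i then s else 0) * B (phi i c s z) (phi i c s z))) y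
            (Pi.single k 1) := by
      show fderiv ℝ (fun z => fderiv ℝ v z (Pi.single j 1)) y (Pi.single k 1) = _
      rw [heq.fderiv_eq]
    rw [hentry, hFj.fderiv]
    rw [key i c s j hWy, ← hXdef]
    simp only [ContinuousLinearMap.add_apply, ContinuousLinearMap.sub_apply,
      ContinuousLinearMap.smul_apply, ContinuousLinearMap.coe_comp',
      Function.comp_apply, ContinuousLinearMap.flip_apply,
      ContinuousLinearMap.zero_apply, ContinuousLinearMap.coe_zero,
      Pi.zero_apply, smul_eq_mul, map_sub, _root_.map_smul, map_zero]
    ring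
  have claimH : ∀ m r : Fin n, hessMat n u X m r
      = fderiv ℝ B X (Pi.single m 1) (Pi.single r 1) := by
    intro m r
    have h : HasFDerivAt (fun z => B z (Pi.single r 1)) _ X :=
      hBX.clm_apply (hasFDerivAt_const (Pi.single r 1) X)
    have hfd := h.fderiv
    show fderiv ℝ (fun z => fderiv ℝ u z (Pi.single r 1)) X (Pi.single m 1) = _
    rw [show (fun z => fderiv ℝ u z (Pi.single r 1))
        = (fun z => B z (Pi.single r 1)) from rfl, hfd]
    simp
  apply Matrix.ext
  intro k j
  rw [claimC j k, bilin_expand]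
  simp only [Matrix.smul_apply, Matrix.mul_apply, Matrix.transpose_apply,
    Matrix.of_apply, smul_eq_mul, Pi.smul_apply]
  simp only [claimH]
  simp only [Finset.mul_sum, Finset.sum_mul]
  rw [Finset.sum_comm]
  refine Finset.sum_congr rfl fun r _ => ?_
  refine Finset.sum_congr rfl fun m _ => ?_
  ring

lemma Winv {z : Fin n → ℝ} (hcs : c ^ 2 + s ^ 2 = 1) (hW : Wt i c s z ≠ 0) :
    c - phi i c s z i * s = (Wt i c s z)⁻¹ := by
  have hW' : c + z i * s ≠ 0 := hW
  simp only [phi, num, Wt, if_pos rfl, ↓reduceIte]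
  field_simp
  linear_combination hcs

lemma det_J (hcs : c ^ 2 + s ^ 2 = 1) {y : Fin n → ℝ} (hW : Wt i c s y ≠ 0) :
    (Matrix.of (fun m k => Dphi i c s y (Pi.single k 1) m)).det
      = ((Wt i c s y)⁻¹) ^ (n + 1) := by
  set t := (Wt i c s y)⁻¹ with ht
  set rr : Fin n → ℝ := fun m => (if m = i then c - 1 else 0) - s * phi i c s y m with hrr
  have hM : (Matrix.of (fun m k => Dphi i c s y (Pi.single k 1) m))
      = t • (1 + Matrix.replicateCol Unit rr * Matrix.replicateRow Unit (Pi.single i (1:ℝ))) := by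
    apply Matrix.ext
    intro m k
    have hkey := congrFun (key i c s k hW) m
    simp only [Pi.smul_apply, smul_eq_mul, Pi.sub_apply] at hkey
    have h2 : Dphi i c s y (Pi.single k 1) m
        = t * (aVec i c k m - (if k = i then s else 0) * phi i c s y m) := by
      rw [ht, inv_mul_eq_div, eq_div_iff hW]
      linear_combination hkey
    rw [Matrix.of_apply, h2]
    have hent : (aVec i c k m - (if k = i then s else 0) * phi i c s y m)
        = (1 : Matrix (Fin n) (Fin n) ℝ) m k
          + (Matrix.replicateCol Unit rr * Matrix.replicateRow Unit (Pi.single i (1:ℝ))) m k := by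
      simp only [Matrix.one_apply, Matrix.mul_apply, Finset.univ_unique,
        Finset.sum_singleton, Matrix.replicateCol_apply, Matrix.replicateRow_apply, hrr, aVec,
        Pi.single_apply]
      by_cases hki : k = i <;> by_cases hmi : m = i <;> by_cases hmk : m = k <;>
        simp_all [Pi.single_apply] <;> ring
    rw [hent, Matrix.smul_apply, Matrix.add_apply, smul_eq_mul]
  rw [hM, Matrix.det_smul, Matrix.det_one_add_replicateCol_mul_replicateRow, single_dotProduct]
  have h3 : (1:ℝ) + (1:ℝ) * rr i = t := by
    have h4 : rr i = (c - 1) - s * phi i c s y i := by simp [hrr]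
    rw [h4, ht, ← Winv i c s hcs hW]; ring
  rw [h3, Fintype.card_fin, ← pow_succ]

lemma forward {z : Fin n → ℝ} (hcs : c ^ 2 + s ^ 2 = 1) (hW : Wt i c s z ≠ 0) :
    (fun j => (if j = i then s + phi i c s z i * c else phi i c s z j)
      / (c - phi i c s z i * s)) = z := by
  have hW' : c + z i * s ≠ 0 := hW
  funext j
  rw [Winv i c s hcs hW, div_eq_mul_inv, inv_inv]
  by_cases hji : j = i
  · subst hji
    simp only [if_pos rfl, phi, num, Wt, ↓reduceIte]
    field_simp [show c + s * z j ≠ 0 by rwa [mul_comm s]]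
    linear_combination z j * hcs
  · simp only [if_neg hji, phi, num, if_neg hji, Wt]
    field_simp

lemma norm_id {z : Fin n → ℝ} (hcs : c ^ 2 + s ^ 2 = 1) (hW : Wt i c s z ≠ 0) :
    (1 + ∑ m, phi i c s z m ^ 2) * Wt i c s z ^ 2 = 1 + ∑ m, z m ^ 2 := by
  have hW' : c + z i * s ≠ 0 := hW
  have h1 : ∑ m, phi i c s z m ^ 2 = (∑ m, num i c s m z ^ 2) * ((Wt i c s z)⁻¹) ^ 2 := by
    rw [Finset.sum_mul]
    exact Finset.sum_congr rfl fun m _ => by rw [phi, mul_pow]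
  have h2 : ∑ m, num i c s m z ^ 2
      = (∑ m, z m ^ 2) + ((z i * c - s) ^ 2 - z i ^ 2) := by
    have : ∀ m : Fin n, num i c s m z ^ 2
        = z m ^ 2 + (if m = i then (z i * c - s) ^ 2 - z i ^ 2 else 0) := by
      intro m
      by_cases hmi : m = i
      · subst hmi; simp only [num, if_pos rfl, if_true]; ring
      · simp [num, hmi]
    rw [Finset.sum_congr rfl fun m _ => this m, Finset.sum_add_distrib,
      Finset.sum_ite_eq' Finset.univ i]
    simp
  rw [h1, h2]
  have hWt : Wt i c s z = c + z i * s := rfl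
  rw [hWt]
  field_simp
  linear_combination (1 + z i ^ 2) * hcs

end RotAux

/-- Rotation invariance in gnomonic coordinates (group action `g³ᵢ(ε)`): if `u > 0`
is a `C²` solution of `det D²u = (1+|x|²)^{-(p+n+1)/2} u^{p−1}` on `ℝⁿ` and `v`
satisfies `v(y) = u(x)/(cos ε − xⁱ sin ε)` where `yʲ = xʲ/(cos ε − xⁱ sin ε)` for
`j ≠ i` and `yⁱ = (sin ε + xⁱ cos ε)/(cos ε − xⁱ sin ε)`, on `{cos ε − xⁱ sin ε > 0}`,
then `det D²v(y) = (1+|y|²)^{-(p+n+1)/2} v(y)^{p−1}` on the image. -/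
theorem rotation_invariance_gnomonic (n : ℕ) (hn : 1 ≤ n) (p : ℝ) (i : Fin n) (ε : ℝ)
    (u : (Fin n → ℝ) → ℝ) (hu : ContDiff ℝ 2 u) (hpos : ∀ x, 0 < u x)
    (hsol : ∀ x : Fin n → ℝ, (hessMat n u x).det
      = (1 + ∑ m, x m ^ 2) ^ (-(p + n + 1) / 2) * u x ^ (p - 1))
    (v : (Fin n → ℝ) → ℝ)
    (hv : ∀ x : Fin n → ℝ, 0 < Real.cos ε - x i * Real.sin ε →
      v (fun j => (if j = i then Real.sin ε + x i * Real.cos ε else x j)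
            / (Real.cos ε - x i * Real.sin ε))
        = u x / (Real.cos ε - x i * Real.sin ε)) :
    ∀ y : Fin n → ℝ, 0 < Real.cos ε + y i * Real.sin ε →
      (hessMat n v y).det
        = (1 + ∑ m, y m ^ 2) ^ (-(p + n + 1) / 2) * v y ^ (p - 1) := by
  intro y hy
  set c := Real.cos ε with hc
  set s := Real.sin ε with hs
  have hcs : c ^ 2 + s ^ 2 = 1 := by rw [hc, hs]; exact Real.cos_sq_add_sin_sq ε
  open RotAux in
  have hy' : 0 < Wt i c s y := hy
  have hWy : RotAux.Wt i c s y ≠ 0 := ne_of_gt hy'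
  set t := RotAux.Wt i c s y with htdef
  have tpos : 0 < t := hy'
  have tne : t ≠ 0 := ne_of_gt tpos
  -- v z = u (phi z) * Wt z on the half-space
  have hveq : ∀ z, 0 < RotAux.Wt i c s z → v z
      = u (RotAux.phi i c s z) * RotAux.Wt i c s z := by
    intro z hz
    have hWz : RotAux.Wt i c s z ≠ 0 := ne_of_gt hz
    have h1 : 0 < c - RotAux.phi i c s z i * s := by
      rw [RotAux.Winv i c s hcs hWz]; exact inv_pos.mpr hz
    have h2 := hv (RotAux.phi i c s z) h1
    rw [RotAux.forward i c s hcs hWz] at h2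
    rw [h2, RotAux.Winv i c s hcs hWz, div_eq_mul_inv, inv_inv]
  set X := RotAux.phi i c s y with hXdef
  set J : Matrix (Fin n) (Fin n) ℝ :=
    Matrix.of (fun m k => RotAux.Dphi i c s y (Pi.single k 1) m) with hJdef
  have htrans := RotAux.hess_transform i c s u v hu hveq hy'
  rw [htrans]
  have hdetJ : J.det = (t⁻¹) ^ (n + 1) := RotAux.det_J i c s hcs hWy
  have hnorm := RotAux.norm_id i c s (z := y) hcs hWy
  have hvy : v y = u X * t := hveq y hy'
  have hvypos : 0 < v y := by rw [hvy]; exact mul_pos (hpos X) tpos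
  have hX2 : (1 : ℝ) + ∑ m, X m ^ 2 = (1 + ∑ m, y m ^ 2) * (t⁻¹) ^ 2 := by
    rw [← hnorm]
    field_simp
    rfl
  have huX : u X = v y * t⁻¹ := by rw [hvy]; field_simp
  -- determinant expansion
  rw [Matrix.det_smul, Matrix.det_mul, Matrix.det_mul, Matrix.det_transpose,
    Fintype.card_fin, hdetJ, hsol X, hX2, huX]
  have hA : (0:ℝ) ≤ 1 + ∑ m, y m ^ 2 := by positivity
  rw [Real.mul_rpow hA (by positivity), Real.mul_rpow (le_of_lt hvypos) (by positivity)]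
  -- collect the powers of t
  have h0 : t ^ n * ((t⁻¹) ^ (n + 1) * (t⁻¹) ^ (n + 1)) = (t⁻¹) ^ (n + 2) := by
    rw [inv_pow, inv_pow]
    field_simp
    ring
  have e1 : (t⁻¹) ^ (n + 2) = t ^ (-((n:ℝ) + 2)) := by
    rw [inv_pow, ← Real.rpow_natCast t (n + 2), ← Real.rpow_neg tpos.le]
    push_cast
    ring_nf
  have e2 : ((t⁻¹) ^ 2 : ℝ) ^ (-(p + n + 1) / 2) = t ^ (p + n + 1) := by
    rw [inv_pow, ← Real.rpow_natCast t 2, ← Real.rpow_neg tpos.le,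
      ← Real.rpow_mul tpos.le]
    congr 1
    push_cast
    ring
  have e3 : (t⁻¹) ^ (p - 1) = t ^ (-(p - 1)) := by
    rw [← Real.rpow_neg_one t, ← Real.rpow_mul tpos.le]
    norm_num
  have hbundle : t ^ n * ((t⁻¹) ^ (n + 1) * (t⁻¹) ^ (n + 1))
      * (((t⁻¹) ^ 2 : ℝ) ^ (-(p + n + 1) / 2) * (t⁻¹) ^ (p - 1)) = 1 := by
    rw [h0, e1, e2, e3, ← Real.rpow_add tpos, ← Real.rpow_add tpos,
      show -((n:ℝ) + 2) + (p + ↑n + 1 + -(p - 1)) = 0 from by ring, Real.rpow_zero]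
  linear_combination ((1 + ∑ m, y m ^ 2) ^ (-(p + ↑n + 1) / 2) * v y ^ (p - 1)) * hbundle
end
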